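/- arXiv:2503.19816 — 3 statements merged into one kernel-verified Lean document; each statement's English description precedes it below -/
import Mathlib

section
/- Let R be a commutative ring and let a, b ∈ R be a unimodular pair, i.e. Ideal.span {a, b} = ⊤. Then for every t ∈ R the pair (b − a, t·a + (1 − t)·b) is again unimodular, i.e. Ideal.span {b − a, t·a + (1 − t)·b} = ⊤. (At t = 0 this pair equals (b − a, b), and at t = 1 it equals (b − a, a).) -/
theorem Ideal.span_pair_eq_top_of_mem_span_pair {R : Type*} [CommSemiring R] {a b x y : R}
    (h : Ideal.span ({a, b} : Set R) = ⊤) (ha : a ∈ Ideal.span ({x, y} : Set R))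
    (hb : b ∈ Ideal.span ({x, y} : Set R)) : Ideal.span ({x, y} : Set R) = ⊤ :=
  top_unique <| h ▸ Ideal.span_le.2 (Set.insert_subset_iff.2 ⟨ha, Set.singleton_subset_iff.2 hb⟩)

/- The new pair is the image of `(a, b)` under the matrix `!![-1, 1; t, 1 - t]` of determinant
`-1`, whose inverse gives `a` and `b` back as combinations of `b - a` and `t * a + (1 - t) * b`. -/
/-- If `(a, b)` is a unimodular pair in a commutative ring `R`, then for every `t : R`
the pair `(b - a, t * a + (1 - t) * b)` is again unimodular.  This is the second
naive `𝔸¹`-homotopy in the proof of Lemma 2.1. -/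
theorem unimodular_second_homotopy {R : Type*} [CommRing R] (a b : R)
    (h : Ideal.span ({a, b} : Set R) = ⊤) (t : R) :
    Ideal.span ({b - a, t * a + (1 - t) * b} : Set R) = ⊤ := by
  refine Ideal.span_pair_eq_top_of_mem_span_pair h ?_ ?_ <;> rw [Ideal.mem_span_pair]
  · exact ⟨t - 1, 1, by ring⟩
  · exact ⟨t, 1, by ring⟩
end

section
/- Let R be a commutative ring. Define three maps H₁, H₂, H₃ : R × R × R → R × R by H₁(a, b, t) = (b − t·a, a), H₂(a, b, t) = (b − a, t·a + (1 − t)·b), and H₃(a, b, t) = (t·b − a, b). Then: (i) for every unimodular pair (a, b) (i.e. Ideal.span {a, b} = ⊤) and every t ∈ R, each of H₁(a, b, t), H₂(a, b, t), H₃(a, b, t) is again a unimodular pair; (ii) H₁(a, b, 0) = (b, a) and H₃(a, b, 0) = (−a, b); (iii) the endpoints match in a chain: H₁(a, b, 1) = H₂(a, b, 1) = (b − a, a) and H₂(a, b, 0) = H₃(a, b, 1) = (b − a, b). In particular, the swap map (a, b) ↦ (b, a) and the map (a, b) ↦ (−a, b) on unimodular pairs are connected by a chain of three naive 𝔸¹-homotopies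 through unimodular pairs, uniformly in R via polynomials with integer coefficients. -/
/-! Each homotopy is, for every fixed `t`, a composite of elementary operations on the pair
(adding a multiple of one entry to the other, swapping, negating), and these do not change the
ideal the pair generates. -/

open Ideal

/-- The first elementary homotopy: `H₁ (a, b, t) = (b - t·a, a)`. -/
def H₁ {R : Type*} [CommRing R] (p : R × R × R) : R × R :=
  (p.2.1 - p.2.2 * p.1, p.1)

/-- The second elementary homotopy: `H₂ (a, b, t) = (b - a, t·a + (1 - t)·b)`. -/
def H₂ {R : Type*} [CommRing R] (p : R × R × R) : R × R :=
  (p.2.1 - p.1, p.2.2 * p.1 + (1 - p.2.2) * p.2.1)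

/-- The third elementary homotopy: `H₃ (a, b, t) = (t·b - a, b)`. -/
def H₃ {R : Type*} [CommRing R] (p : R × R × R) : R × R :=
  (p.2.2 * p.2.1 - p.1, p.2.1)

section ElementaryOperations

variable {R : Type*} [CommRing R] (a b t : R)

theorem span_pair_H₁ : span {(H₁ (a, b, t)).1, (H₁ (a, b, t)).2} = span {a, b} := by
  rw [H₁, span_pair_sub_mul_right, span_pair_comm]

theorem span_pair_H₂ : span {(H₂ (a, b, t)).1, (H₂ (a, b, t)).2} = span {a, b} := by
  have : t * a + (1 - t) * b = b - t * (b - a) := by ring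
  rw [H₂, this, span_pair_sub_mul_left, span_pair_sub_left']

theorem span_pair_H₃ : span {(H₃ (a, b, t)).1, (H₃ (a, b, t)).2} = span {a, b} := by
  rw [H₃, sub_eq_neg_add, span_pair_add_mul_right, span_insert_neg]

end ElementaryOperations

/-- The chain of three naive `𝔸¹`-homotopies from the proof of Lemma 2.1:
`H₁`, `H₂`, `H₃` preserve unimodularity, `H₁` starts at the swap map, `H₃` starts at
`(a, b) ↦ (-a, b)`, and the endpoints of consecutive homotopies match. -/
theorem unimodular_homotopy_chain (R : Type*) [CommRing R] :
    (∀ a b t : R, Ideal.span ({a, b} : Set R) = ⊤ →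
      Ideal.span ({(H₁ (a, b, t)).1, (H₁ (a, b, t)).2} : Set R) = ⊤ ∧
      Ideal.span ({(H₂ (a, b, t)).1, (H₂ (a, b, t)).2} : Set R) = ⊤ ∧
      Ideal.span ({(H₃ (a, b, t)).1, (H₃ (a, b, t)).2} : Set R) = ⊤) ∧
    (∀ a b : R, H₁ (a, b, (0 : R)) = (b, a) ∧ H₃ (a, b, (0 : R)) = (-a, b)) ∧
    (∀ a b : R,
      H₁ (a, b, (1 : R)) = (b - a, a) ∧ H₂ (a, b, (1 : R)) = (b - a, a) ∧
      H₂ (a, b, (0 : R)) = (b - a, b) ∧ H₃ (a, b, (1 : R)) = (b - a, b)) := by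
  refine ⟨fun a b t h => ⟨?_, ?_, ?_⟩, fun a b => ⟨?_, ?_⟩, fun a b => ⟨?_, ?_, ?_, ?_⟩⟩
  · rwa [span_pair_H₁]
  · rwa [span_pair_H₂]
  · rwa [span_pair_H₃]
  all_goals simp [H₁, H₂, H₃]
end

section
/- Let Q denote the quotient topological space (I × I)/∂(I × I), where I = [0, 1] is the unit interval, the boundary ∂(I × I) = {(x, y) ∈ I × I : x ∈ {0, 1} or y ∈ {0, 1}} is collapsed to a single point q₀, and Q is pointed at q₀. Then there is a well-defined continuous pointed map f : Q → Q sending the class of (c, b) to the class of ((1 − c)·b, (1 − c)·(1 − b)/(1 − (1 − c)·b)) whenever (c, b) ≠ (0, 1), and sending the class of (0, 1) (which equals q₀) to q₀; and f is pointed homotopic to the identity of Q, i.e. there exists a continuous H : Q × I → Q with H(x, 0) = f(x), H(x, 1) = x for all x ∈ Q, and H(q₀, s) = q₀ for all s ∈ I. -/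
/-!
In the coordinates `(c, b)` of the square, `σ` is joined to the identity by three explicit
homotopies of the square that keep its boundary on the boundary, so each descends to a
homotopy of `Q` fixing `q₀`. First the coordinate `(1 - c) b` is stretched to `b`, then the
second coordinate is slid linearly to `1 - c`; this reaches the quarter turn
`(c, b) ↦ (b, 1 - c)` about the centre `o`. Finally, for `v = (c, b) - o`, the linear path from
the turned vector to `v` never vanishes, and rescaling it to the sup norm of `v` keeps the
boundary of the square, which is the sup-norm sphere of radius `1/2` about `o`.

The first two homotopies are singular at `(c, b) = (0, 1)`, but there their first coordinate
tends to `1`, and the whole edge `{1} × I` is collapsed to `q₀`.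
-/

open unitInterval

/-- The boundary of the unit square `I × I`. -/
def squareBoundary : Set (I × I) :=
  {p | p.1 = 0 ∨ p.1 = 1 ∨ p.2 = 0 ∨ p.2 = 1}

/-- The setoid on `I × I` collapsing the boundary of the square to a point. -/
def squareCollapse : Setoid (I × I) where
  r p q := p = q ∨ (p ∈ squareBoundary ∧ q ∈ squareBoundary)
  iseqv := by
    constructor
    · intro x; exact Or.inl rfl
    · rintro x y (rfl | ⟨hx, hy⟩)
      · exact Or.inl rfl
      · exact Or.inr ⟨hy, hx⟩
    · rintro x y z (rfl | ⟨hx, hy⟩) h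
      · exact h
      · rcases h with rfl | ⟨hy', hz⟩
        · exact Or.inr ⟨hx, hy⟩
        · exact Or.inr ⟨hx, hz⟩

/-- The quotient space `Q = (I × I)/∂(I × I)`, with the quotient topology. -/
def SquareQuotient : Type := Quotient squareCollapse

instance : TopologicalSpace SquareQuotient := instTopologicalSpaceQuotient

/-- The base point `q₀` of `Q`: the class of the collapsed boundary. -/
def squareBasePoint : SquareQuotient := Quotient.mk squareCollapse ((0 : I), (1 : I))

open Set Filter Topology

section ScaleToNorm

variable {E : Type*} [NormedAddCommGroup E] [NormedSpace ℝ E]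

noncomputable def scaleToNorm (v w : E) : E := (‖v‖ / ‖w‖) • w

theorem norm_scaleToNorm {v w : E} (hw : w ≠ 0) : ‖scaleToNorm v w‖ = ‖v‖ := by
  rw [scaleToNorm, norm_smul, Real.norm_of_nonneg (by positivity),
    div_mul_cancel₀ _ (norm_ne_zero_iff.2 hw)]

theorem norm_scaleToNorm_le (v w : E) : ‖scaleToNorm v w‖ ≤ ‖v‖ := by
  rcases eq_or_ne w 0 with rfl | hw
  · simp [scaleToNorm]
  · exact (norm_scaleToNorm hw).le

theorem scaleToNorm_of_norm_eq {v w : E} (h : ‖w‖ = ‖v‖) : scaleToNorm v w = w := by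
  rcases eq_or_ne w 0 with rfl | hw
  · simp [scaleToNorm]
  · rw [scaleToNorm, ← h, div_self (norm_ne_zero_iff.2 hw), one_smul]

theorem Continuous.scaleToNorm {X : Type*} [TopologicalSpace X] {v w : X → E}
    (hv : Continuous v) (hw : Continuous w) (h : ∀ x, w x = 0 → v x = 0) :
    Continuous fun x => _root_.scaleToNorm (v x) (w x) := by
  refine continuous_iff_continuousAt.2 fun x => ?_
  rcases eq_or_ne (w x) 0 with hx | hx
  · rw [ContinuousAt, show _root_.scaleToNorm (v x) (w x) = 0 by simp [_root_.scaleToNorm, hx]]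
    refine squeeze_zero_norm (fun y => norm_scaleToNorm_le _ _) ?_
    simpa [h x hx] using hv.norm.tendsto x
  · exact (hv.norm.continuousAt.div hw.norm.continuousAt (norm_ne_zero_iff.2 hx)).smul
      hw.continuousAt

end ScaleToNorm

def quarterTurn (v : ℝ × ℝ) : ℝ × ℝ := (v.2, -v.1)

@[fun_prop]
theorem continuous_quarterTurn : Continuous quarterTurn := continuous_snd.prodMk continuous_fst.neg

theorem norm_quarterTurn (v : ℝ × ℝ) : ‖quarterTurn v‖ = ‖v‖ := by
  simp [quarterTurn, Prod.norm_def, max_comm]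

theorem eq_zero_of_lineMap_quarterTurn_eq_zero {t : ℝ} {v : ℝ × ℝ}
    (h : AffineMap.lineMap (quarterTurn v) v t = 0) : v = 0 := by
  rw [AffineMap.lineMap_apply_module] at h
  have h₁ : (1 - t) * v.2 + t * v.1 = 0 := by simpa [quarterTurn] using congrArg Prod.fst h
  have h₂ : (1 - t) * -v.1 + t * v.2 = 0 := by simpa [quarterTurn] using congrArg Prod.snd h
  have hpos : 0 < t ^ 2 + (1 - t) ^ 2 := by nlinarith [sq_nonneg (2 * t - 1)]
  have e₁ : (t ^ 2 + (1 - t) ^ 2) * v.1 = 0 := by linear_combination t * h₁ - (1 - t) * h₂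
  have e₂ : (t ^ 2 + (1 - t) ^ 2) * v.2 = 0 := by linear_combination (1 - t) * h₁ + t * h₂
  exact Prod.ext ((mul_eq_zero.1 e₁).resolve_left hpos.ne')
    ((mul_eq_zero.1 e₂).resolve_left hpos.ne')

namespace SquareQuotient

def mk : I × I → SquareQuotient := Quotient.mk squareCollapse

theorem continuous_mk : Continuous mk := continuous_quot_mk

theorem mk_eq_basePoint {p : I × I} (hp : p ∈ squareBoundary) : mk p = squareBasePoint :=
  Quotient.sound (Or.inr ⟨hp, Or.inl rfl⟩)

theorem tendsto_mk_basePoint {α : Type*} {l : Filter α} {p : α → I × I}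
    (h : Tendsto (fun a => (p a).1) l (𝓝 1)) :
    Tendsto (fun a => mk (p a)) l (𝓝 squareBasePoint) := by
  have hedge : Tendsto p l (𝓝ˢ ({1} ×ˢ univ)) := by
    rw [isCompact_singleton.nhdsSet_prod_eq isCompact_univ, nhdsSet_singleton, nhdsSet_univ]
    exact h.prodMk tendsto_top
  have hmk : Tendsto mk (𝓝ˢ ({1} ×ˢ univ)) (𝓝 squareBasePoint) := by
    rw [tendsto_iff_comap, nhdsSet_le]
    rintro x ⟨hx, -⟩
    rw [← tendsto_iff_comap, ← mk_eq_basePoint (Or.inr (Or.inl hx))]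
    exact continuous_mk.continuousAt
  exact hmk.comp hedge

def toPlane (p : I × I) : ℝ × ℝ := (p.1, p.2)

noncomputable def clamp (x : ℝ × ℝ) : I × I :=
  (projIcc 0 1 zero_le_one x.1, projIcc 0 1 zero_le_one x.2)

@[fun_prop]
theorem continuous_toPlane : Continuous toPlane := by unfold toPlane; fun_prop

theorem continuous_clamp : Continuous clamp :=
  (continuous_projIcc.comp continuous_fst).prodMk (continuous_projIcc.comp continuous_snd)

theorem clamp_toPlane (p : I × I) : clamp (toPlane p) = p :=
  Prod.ext (projIcc_val zero_le_one _) (projIcc_val zero_le_one _)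

def edgeLines : Set (ℝ × ℝ) := {x | x.1 = 0 ∨ x.1 = 1 ∨ x.2 = 0 ∨ x.2 = 1}

theorem toPlane_mem_edgeLines {p : I × I} : toPlane p ∈ edgeLines ↔ p ∈ squareBoundary := by
  simp only [edgeLines, squareBoundary, toPlane, mem_ofPred_eq, Icc.coe_eq_zero, Icc.coe_eq_one]

theorem clamp_mem_squareBoundary {x : ℝ × ℝ} (hx : x ∈ edgeLines) :
    clamp x ∈ squareBoundary := by
  rcases hx with h | h | h | h <;> simp [squareBoundary, clamp, h]

theorem continuous_mk_clamp {X : Type*} [TopologicalSpace X] {g : X → ℝ × ℝ}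
    (hfst : Continuous fun x => (g x).1)
    (hsnd : ∀ x, (g x).1 ≠ 1 → ContinuousAt (fun x => (g x).2) x) :
    Continuous fun x => mk (clamp (g x)) := by
  refine continuous_iff_continuousAt.2 fun x => ?_
  by_cases hx : (g x).1 = 1
  · have hclamp := ((continuous_projIcc (h := zero_le_one)).comp hfst).tendsto x
    rw [Function.comp_apply, hx, projIcc_right] at hclamp
    rw [ContinuousAt, mk_eq_basePoint (clamp_mem_squareBoundary (Or.inr (Or.inl hx)))]
    exact tendsto_mk_basePoint hclamp
  · exact continuous_mk.continuousAt.comp <| continuous_clamp.continuousAt.comp <|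
      hfst.continuousAt.prodMk (hsnd x hx)

theorem continuousMap_ext {Y : Type*} [TopologicalSpace Y] {f g : C(SquareQuotient, Y)}
    (h : ∀ p, f (mk p) = g (mk p)) : f = g :=
  ContinuousMap.ext (Quotient.ind h)

noncomputable def lift (g : C(I × I, SquareQuotient))
    (hg : ∀ p ∈ squareBoundary, g p = squareBasePoint) : C(SquareQuotient, SquareQuotient) where
  toFun := Quotient.lift g <| by
    rintro p q (rfl | ⟨hp, hq⟩)
    exacts [rfl, (hg p hp).trans (hg q hq).symm]
  continuous_toFun := g.continuous.quotient_lift _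

theorem homotopicRel_lift (K : C(I × (I × I), SquareQuotient))
    (hK : ∀ t, ∀ p ∈ squareBoundary, K (t, p) = squareBasePoint) :
    (lift (K.curry 0) (hK 0)).HomotopicRel (lift (K.curry 1) (hK 1)) {squareBasePoint} := by
  refine ⟨{ toFun := fun x => lift (K.curry x.1) (hK x.1) x.2
            continuous_toFun := isQuotientMap_quot_mk.continuous_lift_prod_right K.continuous
            map_zero_left := fun _ => rfl
            map_one_left := fun _ => rfl
            prop' := ?_ }⟩
  rintro t _ rfl
  exact (hK t _ (Or.inl rfl)).trans (hK 0 _ (Or.inl rfl)).symm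

/-- A homotopy of self-maps of the square written by real formulas, which are clamped into the
square; continuity is only asked of the induced maps into `Q`, so the formulas may be singular
at points sent to the collapsed boundary. -/
structure SquareHomotopy where
  toFun : ℝ → ℝ × ℝ → ℝ × ℝ
  continuous_mk_clamp : Continuous fun x : I × (I × I) => mk (clamp (toFun x.1 (toPlane x.2)))
  mem_edgeLines : ∀ t : I, ∀ p ∈ squareBoundary, toFun t (toPlane p) ∈ edgeLines

namespace SquareHomotopy

variable (K : SquareHomotopy)

noncomputable def toContinuousMap : C(I × (I × I), SquareQuotient) :=
  ⟨_, K.continuous_mk_clamp⟩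

theorem toContinuousMap_of_mem_squareBoundary (t : I) {p : I × I} (hp : p ∈ squareBoundary) :
    K.toContinuousMap (t, p) = squareBasePoint :=
  mk_eq_basePoint (clamp_mem_squareBoundary (K.mem_edgeLines t p hp))

noncomputable def stage (t : I) : C(SquareQuotient, SquareQuotient) :=
  lift (K.toContinuousMap.curry t) fun _ => K.toContinuousMap_of_mem_squareBoundary t

theorem stage_mk (t : I) (p : I × I) :
    K.stage t (SquareQuotient.mk p) = SquareQuotient.mk (clamp (K.toFun t (toPlane p))) :=
  rfl

theorem stage_basePoint (t : I) : K.stage t squareBasePoint = squareBasePoint :=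
  K.toContinuousMap_of_mem_squareBoundary t (Or.inl rfl)

theorem homotopicRel : (K.stage 0).HomotopicRel (K.stage 1) {squareBasePoint} :=
  homotopicRel_lift _ fun t _ => K.toContinuousMap_of_mem_squareBoundary t

theorem stage_eq_stage {K' : SquareHomotopy} {t t' : I} (h : K.toFun t = K'.toFun t') :
    K.stage t = K'.stage t' :=
  continuousMap_ext fun p => by rw [stage_mk, stage_mk, h]

end SquareHomotopy

noncomputable def sigma (x : ℝ × ℝ) : ℝ × ℝ :=
  ((1 - x.1) * x.2, (1 - x.1) * (1 - x.2) / (1 - (1 - x.1) * x.2))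

theorem continuousAt_sigma_snd {p : I × I} (hp : toPlane p ≠ (0, 1)) :
    ContinuousAt (fun q => (sigma (toPlane q)).2) p := by
  have hden : 1 - (1 - (p.1 : ℝ)) * p.2 ≠ 0 := by
    contrapose! hp
    obtain ⟨⟨hc₀, hc₁⟩, ⟨hb₀, hb₁⟩⟩ := And.intro p.1.2 p.2.2
    ext <;> simp only [toPlane] <;> nlinarith
  simp only [sigma, toPlane]
  exact ContinuousAt.div (by fun_prop) (by fun_prop) hden

theorem sigma_snd_of_fst_eq_zero {x : ℝ × ℝ} (h₁ : x.1 = 0) (h₂ : x.2 ≠ 1) :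
    (sigma x).2 = 1 := by
  simp [sigma, h₁, div_self (sub_ne_zero.2 h₂.symm)]

theorem sigma_snd_eq_zero {x : ℝ × ℝ} (h : x.1 = 1 ∨ x.2 = 1) : (sigma x).2 = 0 := by
  rcases h with h | h <;> simp [sigma, h]

noncomputable def stretch : SquareHomotopy where
  toFun t x := ((1 - (1 - t) * x.1) * x.2, (sigma x).2)
  continuous_mk_clamp := by
    refine continuous_mk_clamp (by fun_prop) fun z hz => ?_
    exact (continuousAt_sigma_snd fun h => hz (by simp [h])).comp continuous_snd.continuousAt
  mem_edgeLines t p hp := by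
    rcases toPlane_mem_edgeLines.2 hp with h | h | h | h
    · by_cases hb : (toPlane p).2 = 1
      · exact Or.inr (Or.inl (by simp [h, hb]))
      · exact Or.inr (Or.inr (Or.inr (sigma_snd_of_fst_eq_zero h hb)))
    · exact Or.inr (Or.inr (Or.inl (sigma_snd_eq_zero (Or.inl h))))
    · exact Or.inl (by simp [h])
    · exact Or.inr (Or.inr (Or.inl (sigma_snd_eq_zero (Or.inr h))))

noncomputable def slide : SquareHomotopy where
  toFun t x := (x.2, (1 - t) * (sigma x).2 + t * (1 - x.1))
  continuous_mk_clamp := by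
    refine continuous_mk_clamp (by fun_prop) fun z hz => ?_
    have hσ : ContinuousAt (fun z : I × (I × I) => (sigma (toPlane z.2)).2) z :=
      (continuousAt_sigma_snd fun h => hz (by simp [h])).comp continuous_snd.continuousAt
    fun_prop
  mem_edgeLines t p hp := by
    rcases toPlane_mem_edgeLines.2 hp with h | h | h | h
    · by_cases hb : (toPlane p).2 = 1
      · exact Or.inr (Or.inl hb)
      · exact Or.inr (Or.inr (Or.inr (by rw [sigma_snd_of_fst_eq_zero h hb, h]; ring)))
    · exact Or.inr (Or.inr (Or.inl (by rw [sigma_snd_eq_zero (Or.inl h), h]; ring)))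
    · exact Or.inl h
    · exact Or.inr (Or.inl h)

noncomputable def center : ℝ × ℝ := (1 / 2, 1 / 2)

theorem abs_sub_half_eq_half_iff {x : ℝ} : |x - 1 / 2| = 1 / 2 ↔ x = 0 ∨ x = 1 := by
  rw [abs_eq (by norm_num)]
  constructor <;> rintro (h | h)
  exacts [Or.inr (by linarith), Or.inl (by linarith), Or.inr (by rw [h]; norm_num),
    Or.inl (by rw [h]; norm_num)]

theorem norm_toPlane_sub_center {p : I × I} (hp : p ∈ squareBoundary) :
    ‖toPlane p - center‖ = 1 / 2 := by
  have hc : |(p.1 : ℝ) - 1 / 2| ≤ 1 / 2 :=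
    abs_le.2 ⟨by linarith [p.1.2.1], by linarith [p.1.2.2]⟩
  have hb : |(p.2 : ℝ) - 1 / 2| ≤ 1 / 2 :=
    abs_le.2 ⟨by linarith [p.2.2.1], by linarith [p.2.2.2]⟩
  simp only [Prod.norm_def, toPlane, center, Prod.fst_sub, Prod.snd_sub, Real.norm_eq_abs]
  rcases toPlane_mem_edgeLines.2 hp with h | h | h | h <;> simp only [toPlane] at h
  · rw [abs_sub_half_eq_half_iff.2 (Or.inl h), max_eq_left hb]
  · rw [abs_sub_half_eq_half_iff.2 (Or.inr h), max_eq_left hb]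
  · rw [abs_sub_half_eq_half_iff.2 (Or.inl h), max_eq_right hc]
  · rw [abs_sub_half_eq_half_iff.2 (Or.inr h), max_eq_right hc]

theorem center_add_mem_edgeLines {w : ℝ × ℝ} (hw : ‖w‖ = 1 / 2) :
    center + w ∈ edgeLines := by
  have hedge (x : ℝ) (h : |x| = 1 / 2) : 1 / 2 + x = 0 ∨ 1 / 2 + x = 1 :=
    abs_sub_half_eq_half_iff.1 (by rwa [add_sub_cancel_left])
  rw [Prod.norm_def, Real.norm_eq_abs, Real.norm_eq_abs] at hw
  rcases max_choice |w.1| |w.2| with h | h <;> rw [h] at hw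
  · exact (hedge _ hw).elim Or.inl (Or.inr ∘ Or.inl)
  · exact (hedge _ hw).elim (Or.inr ∘ Or.inr ∘ Or.inl) (Or.inr ∘ Or.inr ∘ Or.inr)

noncomputable def rotateBack : SquareHomotopy where
  toFun t x :=
    center + scaleToNorm (x - center) (AffineMap.lineMap (quarterTurn (x - center)) (x - center) t)
  continuous_mk_clamp := by
    have hv : Continuous fun z : I × (I × I) => toPlane z.2 - center := by fun_prop
    have ht : Continuous fun z : I × (I × I) => (z.1 : ℝ) := by fun_prop
    have hw := (continuous_quarterTurn.comp hv).lineMap hv ht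
    exact continuous_mk.comp (continuous_clamp.comp (continuous_const.add
      (hv.scaleToNorm hw fun z => eq_zero_of_lineMap_quarterTurn_eq_zero)))
  mem_edgeLines t p hp := by
    have hv := norm_toPlane_sub_center hp
    have hw :
        AffineMap.lineMap (quarterTurn (toPlane p - center)) (toPlane p - center) (t : ℝ) ≠ 0 :=
      fun h => by simp [eq_zero_of_lineMap_quarterTurn_eq_zero h] at hv
    exact center_add_mem_edgeLines ((norm_scaleToNorm hw).trans hv)

theorem stretch_stage_one : stretch.stage 1 = slide.stage 0 :=
  stretch.stage_eq_stage (by funext x; simp [stretch, slide])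

theorem slide_stage_one : slide.stage 1 = rotateBack.stage 0 := by
  refine slide.stage_eq_stage (funext fun x => ?_)
  have hrot : rotateBack.toFun 0 x = center + quarterTurn (x - center) := by
    simp only [rotateBack, AffineMap.lineMap_apply_zero,
      scaleToNorm_of_norm_eq (norm_quarterTurn _)]
  rw [Icc.coe_zero, Icc.coe_one, hrot]
  ext <;>
    simp only [slide, quarterTurn, center, Prod.fst_add, Prod.snd_add, Prod.fst_sub,
      Prod.snd_sub] <;>
    ring

theorem rotateBack_stage_one : rotateBack.stage 1 = ContinuousMap.id _ :=
  continuousMap_ext fun p => by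
    simp [SquareHomotopy.stage_mk, rotateBack, scaleToNorm_of_norm_eq, clamp_toPlane]

noncomputable def sigmaMap : C(SquareQuotient, SquareQuotient) := stretch.stage 0

theorem sigmaMap_mk (p : I × I) : sigmaMap (mk p) = mk (clamp (sigma (toPlane p))) := by
  rw [sigmaMap, SquareHomotopy.stage_mk]
  congr 2
  simp [stretch, sigma]

theorem sigmaMap_basePoint : sigmaMap squareBasePoint = squareBasePoint :=
  stretch.stage_basePoint 0

theorem sigmaMap_homotopicRel_id :
    sigmaMap.HomotopicRel (ContinuousMap.id _) {squareBasePoint} := by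
  have h₁ := stretch.homotopicRel
  have h₂ := slide.homotopicRel
  have h₃ := rotateBack.homotopicRel
  rw [← stretch_stage_one] at h₂
  rw [← slide_stage_one, rotateBack_stage_one] at h₃
  exact (h₁.trans h₂).trans h₃

end SquareQuotient

/-- There is a well-defined continuous pointed self-map `f` of
`Q = (I × I)/∂(I × I)` sending the class of `(c, b) ≠ (0, 1)` to the class of
`((1 - c)·b, (1 - c)·(1 - b)/(1 - (1 - c)·b))` and the base point to the base point,
and `f` is pointed homotopic to the identity of `Q`.  This is the key topological
input in the proof of Proposition 2.6. -/
theorem sigma_reparametrization_pointed_homotopic_id :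
    ∃ f : SquareQuotient → SquareQuotient, Continuous f ∧
      f squareBasePoint = squareBasePoint ∧
      (∀ p : I × I, p ≠ ((0 : I), (1 : I)) →
        ∀ q : I × I,
          (q.1 : ℝ) = (1 - (p.1 : ℝ)) * (p.2 : ℝ) →
          (q.2 : ℝ) =
            (1 - (p.1 : ℝ)) * (1 - (p.2 : ℝ)) / (1 - (1 - (p.1 : ℝ)) * (p.2 : ℝ)) →
          f (Quotient.mk squareCollapse p) = Quotient.mk squareCollapse q) ∧
      ∃ H : SquareQuotient × I → SquareQuotient, Continuous H ∧
        (∀ x, H (x, 0) = f x) ∧ (∀ x, H (x, 1) = x) ∧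
        (∀ s : I, H (squareBasePoint, s) = squareBasePoint) := by
  obtain ⟨F⟩ := SquareQuotient.sigmaMap_homotopicRel_id
  refine ⟨SquareQuotient.sigmaMap, SquareQuotient.sigmaMap.continuous,
    SquareQuotient.sigmaMap_basePoint, fun p _ q hq₁ hq₂ => ?_, fun x => F (x.2, x.1),
    F.continuous.comp continuous_swap, F.apply_zero, F.apply_one,
    fun s => (F.eq_fst s rfl).trans SquareQuotient.sigmaMap_basePoint⟩
  have hσ : SquareQuotient.sigma (SquareQuotient.toPlane p) = SquareQuotient.toPlane q :=
    Prod.ext hq₁.symm hq₂.symm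
  rw [← SquareQuotient.clamp_toPlane q, ← hσ]
  exact SquareQuotient.sigmaMap_mk p
end
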